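/- Closed form of the on-policy return variance: for every k, every t ∈ {0,…,T−1}, and every state s ∈ 𝒮, V(G^PDIS_k(τ^{π^(k)_{t:T−1}}_{t:T−1}) | S_t = s) = E_{A~π^(k)_t(·|s)}[ĥq_{π^(k),t}(s,A)] − v_{π^(k),t}(s)², where the trajectory is generated by the target policy π^(k) itself (so all importance sampling ratios equal 1). -/
import Mathlib


open Finset

section RL

variable {S A : Type*}

/-- Expectation, over the random trajectory of length `h` generated from time `t` and state `s`
by the behavior policy `μ` in the MDP with transition kernel `p`, of a functional `f` of the
trajectory (recorded as the list of successive (action, next-state) pairs).  This is the finite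
sum over all trajectories weighted by their probabilities; trajectories of zero probability
contribute `0`. -/
noncomputable def Etraj [Fintype S] [Fintype A] (p : S → A → S → ℝ)
    (μ : ℕ → S → A → ℝ) : ℕ → ℕ → S → (List (A × S) → ℝ) → ℝ
  | 0, _, _, f => f []
  | h + 1, t, s, f =>
      ∑ a : A, ∑ s' : S,
        μ t s a * p s a s' * Etraj p μ h (t + 1) s' (fun l => f ((a, s') :: l))

/-- Total (undiscounted) reward `Σ_i R_{i+1}` along a trajectory starting from state `s`. -/
noncomputable def retF (r : S → A → ℝ) : S → List (A × S) → ℝ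
  | _, [] => 0
  | s, (a, s') :: l => r s a + retF r s' l

/-- The PDIS return `G^PDIS(τ^{μ_{t:T-1}}_{t:T-1}) = Σ_i (∏_{j=t}^i ρ^{π,μ}_j) R_{i+1}` of a
trajectory starting at time `t` in state `s`, with target policy `π` and behavior policy `μ`,
in its recursive form. -/
noncomputable def pdisF (r : S → A → ℝ) (π μ : ℕ → S → A → ℝ) :
    ℕ → S → List (A × S) → ℝ
  | _, _, [] => 0
  | t, s, (a, s') :: l => π t s a / μ t s a * (r s a + pdisF r π μ (t + 1) s' l)

/-- State value function `v_{π,t}(s) = E_π[Σ_{i=t+1}^T R_i | S_t = s]` for horizon `T`. -/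
noncomputable def vval [Fintype S] [Fintype A] (p : S → A → S → ℝ) (r : S → A → ℝ)
    (π : ℕ → S → A → ℝ) (T t : ℕ) (s : S) : ℝ :=
  Etraj p π (T - t) t s (retF r s)

/-- Action value function `q_{π,t}(s,a) = E_π[Σ_{i=t+1}^T R_i | S_t = s, A_t = a]`. -/
noncomputable def qval [Fintype S] [Fintype A] (p : S → A → S → ℝ) (r : S → A → ℝ)
    (π : ℕ → S → A → ℝ) (T t : ℕ) (s : S) (a : A) : ℝ :=
  r s a + ∑ s' : S, p s a s' * vval p r π T (t + 1) s'

/-- Conditional expectation `E[G^PDIS(τ^{μ_{t:T-1}}_{t:T-1}) | S_t = s]`. -/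
noncomputable def Epdis [Fintype S] [Fintype A] (p : S → A → S → ℝ) (r : S → A → ℝ)
    (π μ : ℕ → S → A → ℝ) (T t : ℕ) (s : S) : ℝ :=
  Etraj p μ (T - t) t s (pdisF r π μ t s)

/-- Conditional variance `V(G^PDIS(τ^{μ_{t:T-1}}_{t:T-1}) | S_t = s)`. -/
noncomputable def Vpdis [Fintype S] [Fintype A] (p : S → A → S → ℝ) (r : S → A → ℝ)
    (π μ : ℕ → S → A → ℝ) (T t : ℕ) (s : S) : ℝ :=
  Etraj p μ (T - t) t s (fun l => pdisF r π μ t s l ^ 2) - Epdis p r π μ T t s ^ 2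

/-- `ν_{π,t}(s,a) = V_{S'~p(·|s,a)}(v_{π,t+1}(S'))` for `t ≤ T-2`, and `ν_{π,T-1}(s,a) = 0`. -/
noncomputable def nuval [Fintype S] [Fintype A] (p : S → A → S → ℝ) (r : S → A → ℝ)
    (π : ℕ → S → A → ℝ) (T t : ℕ) (s : S) (a : A) : ℝ :=
  if t = T - 1 then 0
  else (∑ s' : S, p s a s' * vval p r π T (t + 1) s' ^ 2)
       - (∑ s' : S, p s a s' * vval p r π T (t + 1) s') ^ 2

/-- The variance-augmented action value `ĥq_{π,t}(s,a)`:
`ĥq_{π,T-1}(s,a) = q_{π,T-1}(s,a)²` and, for `t ≤ T-2`,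
`ĥq_{π,t}(s,a) = q_{π,t}(s,a)² + ν_{π,t}(s,a) + Σ_{s'} p(s'|s,a) V(G^PDIS(τ^{π_{t+1:T-1}}) | S_{t+1}=s')`. -/
noncomputable def hq [Fintype S] [Fintype A] (p : S → A → S → ℝ) (r : S → A → ℝ)
    (π : ℕ → S → A → ℝ) (T t : ℕ) (s : S) (a : A) : ℝ :=
  if t = T - 1 then qval p r π T t s a ^ 2
  else qval p r π T t s a ^ 2 + nuval p r π T t s a
       + ∑ s' : S, p s a s' * Vpdis p r π π T (t + 1) s'

/-- The tailored behavior policy `ĥμ_t(a|s) ∝ sqrt(Σ_k π^(k)_t(a|s)² ĥq_{π^(k),t}(s,a))`,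
normalized over `a ∈ 𝒜` (uniform on `𝒜` if all the weights vanish). -/
noncomputable def hmu [Fintype S] [Fintype A] (p : S → A → S → ℝ) (r : S → A → ℝ)
    (K : ℕ) (π : Fin K → ℕ → S → A → ℝ) (T t : ℕ) (s : S) (a : A) : ℝ :=
  if (∑ b : A, Real.sqrt (∑ k : Fin K, π k t s b ^ 2 * hq p r (π k) T t s b)) = 0 then
    (Fintype.card A : ℝ)⁻¹
  else
    Real.sqrt (∑ k : Fin K, π k t s a ^ 2 * hq p r (π k) T t s a) /
      ∑ b : A, Real.sqrt (∑ k : Fin K, π k t s b ^ 2 * hq p r (π k) T t s b)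

/-- `w^(k)_t(s,a) = π^(k)_t(a|s)² ĥq_{π^(k),t}(s,a)`. -/
noncomputable def wRL [Fintype S] [Fintype A] (p : S → A → S → ℝ) (r : S → A → ℝ)
    (K : ℕ) (π : Fin K → ℕ → S → A → ℝ) (T : ℕ) (k : Fin K) (t : ℕ) (s : S) (a : A) : ℝ :=
  π k t s a ^ 2 * hq p r (π k) T t s a

/-- `η^(k)_t(s,a) = w^(k)_t(s,a) / w̄_t(s,a)` with `w̄_t(s,a) = (1/K) Σ_j w^(j)_t(s,a)`. -/
noncomputable def etaRL [Fintype S] [Fintype A] (p : S → A → S → ℝ) (r : S → A → ℝ)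
    (K : ℕ) (π : Fin K → ℕ → S → A → ℝ) (T : ℕ) (k : Fin K) (t : ℕ) (s : S) (a : A) : ℝ :=
  wRL p r K π T k t s a / ((∑ j : Fin K, wRL p r K π T j t s a) / K)

/-- `η̲_t = min_{k,s,a} η^(k)_t(s,a)`. -/
noncomputable def etaLoRL [Fintype S] [Fintype A] (p : S → A → S → ℝ) (r : S → A → ℝ)
    (K : ℕ) (π : Fin K → ℕ → S → A → ℝ) (T t : ℕ) : ℝ :=
  ⨅ x : Fin K × S × A, etaRL p r K π T x.1 t x.2.1 x.2.2

/-- `η̄_t = max_{k,s,a} η^(k)_t(s,a)`. -/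
noncomputable def etaHiRL [Fintype S] [Fintype A] (p : S → A → S → ℝ) (r : S → A → ℝ)
    (K : ℕ) (π : Fin K → ℕ → S → A → ℝ) (T t : ℕ) : ℝ :=
  ⨆ x : Fin K × S × A, etaRL p r K π T x.1 t x.2.1 x.2.2

end RL

section AuxLemmas

variable {S A : Type*} [Fintype S] [Fintype A]

lemma Etraj_add (p : S → A → S → ℝ) (μ : ℕ → S → A → ℝ) :
    ∀ (h t : ℕ) (s : S) (f g : List (A × S) → ℝ),
      Etraj p μ h t s (fun l => f l + g l) = Etraj p μ h t s f + Etraj p μ h t s g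
  | 0, _, _, _, _ => rfl
  | h + 1, t, s, f, g => by
    simp only [Etraj, Etraj_add p μ h, mul_add, Finset.sum_add_distrib]

lemma Etraj_smul (p : S → A → S → ℝ) (μ : ℕ → S → A → ℝ) :
    ∀ (h t : ℕ) (s : S) (c : ℝ) (f : List (A × S) → ℝ),
      Etraj p μ h t s (fun l => c * f l) = c * Etraj p μ h t s f
  | 0, _, _, _, _ => rfl
  | h + 1, t, s, c, f => by
    simp only [Etraj, Etraj_smul p μ h, Finset.mul_sum]
    refine Finset.sum_congr rfl fun a _ => Finset.sum_congr rfl fun s' _ => by ring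

lemma Etraj_const (p : S → A → S → ℝ) (μ : ℕ → S → A → ℝ)
    (hp1 : ∀ s a, ∑ s' : S, p s a s' = 1) :
    ∀ (h t : ℕ) (s : S) (c : ℝ), (∀ u s', u < t + h → ∑ a : A, μ u s' a = 1) →
      Etraj p μ h t s (fun _ => c) = c
  | 0, _, _, _, _ => rfl
  | h + 1, t, s, c, hμ => by
    simp only [Etraj]
    have hrec : ∀ s' : S, Etraj p μ h (t + 1) s' (fun _ => c) = c := fun s' =>
      Etraj_const p μ hp1 h (t + 1) s' c (fun u s'' hu => hμ u s'' (by omega))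
    calc ∑ a : A, ∑ s' : S, μ t s a * p s a s' * Etraj p μ h (t + 1) s' (fun _ => c)
        = ∑ a : A, μ t s a * c := by
          refine Finset.sum_congr rfl fun a _ => ?_
          rw [show (∑ s' : S, μ t s a * p s a s' * Etraj p μ h (t + 1) s' (fun _ => c))
              = ∑ s' : S, μ t s a * c * p s a s' from
            Finset.sum_congr rfl fun s' _ => by rw [hrec s']; ring]
          rw [← Finset.mul_sum, hp1, mul_one]
      _ = c := by rw [← Finset.sum_mul, hμ t s (by omega), one_mul]

lemma Etraj_pdis (p : S → A → S → ℝ) (r : S → A → ℝ) (π : ℕ → S → A → ℝ) :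
    ∀ (h t : ℕ) (s : S) (F : ℝ → ℝ),
      Etraj p π h t s (fun l => F (pdisF r π π t s l))
        = Etraj p π h t s (fun l => F (retF r s l))
  | 0, _, _, _ => rfl
  | h + 1, t, s, F => by
    simp only [Etraj]
    refine Finset.sum_congr rfl fun a _ => Finset.sum_congr rfl fun s' _ => ?_
    by_cases ha : π t s a = 0
    · simp [ha]
    · simp only [pdisF, retF, div_self ha, one_mul]
      exact congrArg (fun z => π t s a * p s a s' * z)
        (Etraj_pdis p r π h (t + 1) s' (fun x => F (r s a + x)))

lemma Vpdis_eq (p : S → A → S → ℝ) (r : S → A → ℝ) (π : ℕ → S → A → ℝ) (T u : ℕ) (s : S) :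
    Vpdis p r π π T u s
      = Etraj p π (T - u) u s (fun l => retF r s l ^ 2) - vval p r π T u s ^ 2 := by
  have h1 : Epdis p r π π T u s = vval p r π T u s :=
    Etraj_pdis p r π (T - u) u s (fun x => x)
  have h2 : Etraj p π (T - u) u s (fun l => pdisF r π π u s l ^ 2)
      = Etraj p π (T - u) u s (fun l => retF r s l ^ 2) :=
    Etraj_pdis p r π (T - u) u s (fun x => x ^ 2)
  unfold Vpdis
  rw [h2, h1]

lemma Etraj_sq (p : S → A → S → ℝ) (r : S → A → ℝ)
    (hp1 : ∀ s a, ∑ s' : S, p s a s' = 1) (T : ℕ) (π : ℕ → S → A → ℝ)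
    (hπ : ∀ t s, t < T → ∑ a : A, π t s a = 1) :
    ∀ (h t : ℕ) (s : S), t + h = T → 1 ≤ h →
      Etraj p π h t s (fun l => retF r s l ^ 2)
        = ∑ a : A, π t s a * hq p r π T t s a := by
  intro h
  match h with
  | 0 => intro t s _ h1; omega
  | 1 =>
    intro t s hTt _
    have hsub : T - (t + 1) = 0 := by omega
    have hv0 : ∀ s' : S, vval p r π T (t + 1) s' = 0 := by
      intro s'
      simp only [vval, hsub, Etraj, retF]
    rw [show (1 : ℕ) = 0 + 1 from rfl]
    simp only [Etraj, retF, add_zero]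
    refine Finset.sum_congr rfl fun a _ => ?_
    have hqv : qval p r π T t s a = r s a := by
      simp only [qval, hv0, mul_zero, Finset.sum_const_zero, add_zero]
    have hhq : hq p r π T t s a = r s a ^ 2 := by
      simp only [hq, if_pos (show t = T - 1 by omega), hqv]
    rw [hhq, show (∑ s' : S, π t s a * p s a s' * r s a ^ 2)
        = ∑ s' : S, π t s a * r s a ^ 2 * p s a s' from
      Finset.sum_congr rfl fun s' _ => by ring]
    rw [← Finset.mul_sum, hp1, mul_one]
  | (h' + 2) =>
    intro t s hTt _
    have hsub : T - (t + 1) = h' + 1 := by omega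
    have hvv : ∀ s' : S, Etraj p π (h' + 1) (t + 1) s' (retF r s') = vval p r π T (t + 1) s' := by
      intro s'
      simp only [vval, hsub]
    have hVe : ∀ s' : S, Etraj p π (h' + 1) (t + 1) s' (fun l => retF r s' l ^ 2)
        = Vpdis p r π π T (t + 1) s' + vval p r π T (t + 1) s' ^ 2 := by
      intro s'
      have h0 := Vpdis_eq p r π T (t + 1) s'
      rw [hsub] at h0
      linarith
    conv_lhs => rw [Etraj]
    simp only [retF]
    refine Finset.sum_congr rfl fun a _ => ?_
    have hne : ¬ (t = T - 1) := by omega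
    have expand : ∀ s' : S, Etraj p π (h' + 1) (t + 1) s' (fun l => (r s a + retF r s' l) ^ 2)
        = Vpdis p r π π T (t + 1) s' + vval p r π T (t + 1) s' ^ 2
          + 2 * r s a * vval p r π T (t + 1) s' + r s a ^ 2 := by
      intro s'
      have hc : Etraj p π (h' + 1) (t + 1) s' (fun _ => r s a ^ 2) = r s a ^ 2 :=
        Etraj_const p π hp1 (h' + 1) (t + 1) s' _ (fun u s'' hu => hπ u s'' (by omega))
      have hfe : Etraj p π (h' + 1) (t + 1) s' (fun l => (r s a + retF r s' l) ^ 2)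
          = Etraj p π (h' + 1) (t + 1) s'
              (fun l => retF r s' l ^ 2 + (2 * r s a * retF r s' l + r s a ^ 2)) := by
        congr 1
        funext l
        ring
      rw [hfe]
      simp only [Etraj_add p π, Etraj_smul p π, hc]
      rw [hVe s', hvv s']
      ring
    simp only [expand]
    have hhq : hq p r π T t s a
        = qval p r π T t s a ^ 2 + nuval p r π T t s a
          + ∑ s' : S, p s a s' * Vpdis p r π π T (t + 1) s' := by
      simp only [hq, if_neg hne]
    rw [hhq]
    simp only [qval, nuval, if_neg hne]
    rw [show (∑ s' : S, π t s a * p s a s' *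
          (Vpdis p r π π T (t + 1) s' + vval p r π T (t + 1) s' ^ 2
            + 2 * r s a * vval p r π T (t + 1) s' + r s a ^ 2))
        = π t s a * ∑ s' : S, p s a s' *
          (Vpdis p r π π T (t + 1) s' + vval p r π T (t + 1) s' ^ 2
            + 2 * r s a * vval p r π T (t + 1) s' + r s a ^ 2) from by
      rw [Finset.mul_sum]
      exact Finset.sum_congr rfl fun s' _ => by ring]
    have e1 : (∑ s' : S, p s a s' *
          (Vpdis p r π π T (t + 1) s' + vval p r π T (t + 1) s' ^ 2
            + 2 * r s a * vval p r π T (t + 1) s' + r s a ^ 2))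
        = (∑ s' : S, p s a s' * Vpdis p r π π T (t + 1) s')
          + (∑ s' : S, p s a s' * vval p r π T (t + 1) s' ^ 2)
          + 2 * r s a * (∑ s' : S, p s a s' * vval p r π T (t + 1) s')
          + r s a ^ 2 := by
      rw [show (∑ s' : S, p s a s' *
            (Vpdis p r π π T (t + 1) s' + vval p r π T (t + 1) s' ^ 2
              + 2 * r s a * vval p r π T (t + 1) s' + r s a ^ 2))
          = ∑ s' : S, (p s a s' * Vpdis p r π π T (t + 1) s'
              + p s a s' * vval p r π T (t + 1) s' ^ 2
              + 2 * r s a * (p s a s' * vval p r π T (t + 1) s')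
              + p s a s' * r s a ^ 2) from
        Finset.sum_congr rfl fun s' _ => by ring]
      rw [Finset.sum_add_distrib, Finset.sum_add_distrib, Finset.sum_add_distrib,
        ← Finset.mul_sum Finset.univ (fun s' => p s a s' * vval p r π T (t + 1) s') (2 * r s a),
        ← Finset.sum_mul Finset.univ (fun s' => p s a s') (r s a ^ 2), hp1, one_mul]
    rw [e1]
    ring

end AuxLemmas

/-- closed form of the on-policy return variance: for every `k`, `t ∈ {0,…,T-1}`
and state `s`, `V(G^PDIS_k(τ^{π^(k)_{t:T-1}}) | S_t = s)
  = E_{A~π^(k)_t(·|s)}[ĥq_{π^(k),t}(s,A)] - v_{π^(k),t}(s)²`. -/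
theorem stmt11 {S A : Type*} [Fintype S] [Fintype A] [Nonempty S] [Nonempty A]
    (p : S → A → S → ℝ) (r : S → A → ℝ)
    (hp0 : ∀ s a s', 0 ≤ p s a s') (hp1 : ∀ s a, ∑ s' : S, p s a s' = 1)
    (T : ℕ) (hT : 1 ≤ T)
    (K : ℕ) (π : Fin K → ℕ → S → A → ℝ)
    (hπ : ∀ k t s, t < T → (∀ a, 0 ≤ π k t s a) ∧ (∑ a : A, π k t s a = 1))
    (k : Fin K) (t : ℕ) (ht : t < T) (s : S) :
    Vpdis p r (π k) (π k) T t s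
      = (∑ a : A, π k t s a * hq p r (π k) T t s a) - vval p r (π k) T t s ^ 2 := by
  rw [Vpdis_eq p r (π k) T t s,
    Etraj_sq p r hp1 T (π k) (fun u s' hu => (hπ k u s' hu).2) (T - t) t s (by omega) (by omega)]
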